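/- Assume p_min > p_tail and T ≥ 1. (i) Let q > 0 satisfy q ≤ 2πT/3 and p_min·exp(−q²/2) ≥ p_tail + (p_min − p_tail)/2; if θ ∈ ℝ satisfies |θ − λ_m|_{2π} ≤ q/T for some m ∈ D, then for every e ∈ ℂ with |e| ≤ (p_min − p_tail)/8 one has |Σ_{m′=1}^M p_{m′} φ_p(θ − λ_{m′}) + e| ≥ p_tail + 3(p_min − p_tail)/8. (ii) Let α > 0 satisfy α ≤ 2πT and 1.01·exp(−α²/18) ≤ (p_min − p_tail)/8; if θ ∈ ℝ satisfies |θ − λ_m|_{2π} ≥ α/(3T) for every m ∈ D, then for every e ∈ ℂ with |e| ≤ (p_min − p_tail)/8 one has |Σ_{m′=1}^M p_{m′} φ_p(θ − λ_{m′}) + e| ≤ p_tail + (p_min − p_tail)/4. -/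

import Mathlib

/-! With `r = |x|_{2π} ∈ [0, π]`, pairing the terms `j` and `-j` of the series and using
`cosh ≥ 1` gives `φ_p(x) ≥ exp(-r²T²/2)`, while keeping only the two terms nearest to `r` and
bounding the others by a geometric series gives
`φ_p(x) ≤ exp(-r²T²/2) + exp(-(2π - r)²T²/2) + 4 exp(-2π²T²)`.
For `T ≥ 1` and `0 ≤ c ≤ 2π/3` the latter yields `φ_p ≤ 1 + exp(-c²T²/2)` everywhere and
`φ_p ≤ 1.01 exp(-c²T²/2)` wherever `|x|_{2π} ≥ c`. Part (i) keeps a single dominant term of the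
weighted sum; part (ii), with `c = α/(3T)`, bounds the dominant terms by `(p_min - p_tail)/8` and
all others by `1 + (p_min - p_tail)/8`. -/

open Real Set

noncomputable section

/-- The (unnormalized) `2π`-periodization of the Gaussian `x ↦ exp(-x²T²/2)`. -/
def periodicGaussSum (T x : ℝ) : ℝ :=
  ∑' j : ℤ, Real.exp (-((x + 2 * π * j) ^ 2 * T ^ 2) / 2)

/-- The normalizing constant `W = (Σ_{j∈ℤ} exp(-2π²j²T²))⁻¹`, so that `φ_p(0) = 1`. -/
def Wconst (T : ℝ) : ℝ := (∑' j : ℤ, Real.exp (-(2 * π ^ 2 * j ^ 2 * T ^ 2)))⁻¹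

/-- The periodic Gaussian `φ_p(x) = W·Σ_{j∈ℤ} exp(-(x+2πj)²T²/2)`. -/
def phip (T x : ℝ) : ℝ := Wconst T * periodicGaussSum T x

/-- The `mod 2π` distance `|u − v|_{2π} = min_{j∈ℤ} |u − v + 2πj|`. -/
def dist2pi (u v : ℝ) : ℝ := ⨅ j : ℤ, |u - v + 2 * π * j|

def scaledGauss (T y : ℝ) : ℝ := rexp (-(y ^ 2 * T ^ 2) / 2)

lemma scaledGauss_pos (T y : ℝ) : 0 < scaledGauss T y := exp_pos _

lemma scaledGauss_neg (T y : ℝ) : scaledGauss T (-y) = scaledGauss T y := by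
  simp [scaledGauss]

lemma scaledGauss_zero (T : ℝ) : scaledGauss T 0 = 1 := by
  simp [scaledGauss]

lemma scaledGauss_le_one (T y : ℝ) : scaledGauss T y ≤ 1 :=
  exp_le_one_iff.2 (by have := sq_nonneg (y * T); nlinarith)

section

variable {T : ℝ}

lemma scaledGauss_div (hT : T ≠ 0) (a : ℝ) : scaledGauss T (a / T) = rexp (-a ^ 2 / 2) := by
  rw [scaledGauss]; field_simp

lemma scaledGauss_le_of_sq_le {y z : ℝ} (h : y ^ 2 ≤ z ^ 2) : scaledGauss T z ≤ scaledGauss T y :=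
  exp_le_exp.2 (by have := sq_nonneg T; nlinarith)

lemma scaledGauss_le_mul_exp_neg (hT : 1 ≤ T) {c y b : ℝ} (hb : 0 ≤ b)
    (h : c ^ 2 + 2 * b ≤ y ^ 2) : scaledGauss T y ≤ scaledGauss T c * rexp (-b) := by
  rw [scaledGauss, scaledGauss, ← exp_add]
  refine exp_le_exp.2 ?_
  have hT2 : 1 ≤ T ^ 2 := by nlinarith
  nlinarith [mul_le_mul_of_nonneg_left hT2 (by linarith : 0 ≤ y ^ 2 - c ^ 2 - 2 * b)]

lemma scaledGauss_le_pow {y : ℝ} {k : ℕ} (h : 2 * π * k ≤ |y|) :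
    scaledGauss T y ≤ scaledGauss T (2 * π) ^ k := by
  have hk : (k : ℝ) ≤ (k : ℝ) ^ 2 := by
    rcases k.eq_zero_or_pos with rfl | hk
    · simp
    · nlinarith [(Nat.one_le_cast (α := ℝ)).2 hk]
  have hy : (2 * π) ^ 2 * k ≤ y ^ 2 := by
    have h0 : 0 ≤ 2 * π * k := by positivity
    nlinarith [sq_abs y, mul_le_mul h h h0 (abs_nonneg y), pi_pos]
  rw [scaledGauss, scaledGauss, ← exp_nat_mul]
  exact exp_le_exp.2 (by have := sq_nonneg T; nlinarith)

lemma two_mul_scaledGauss_mul_le_add (x a : ℝ) :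
    2 * (scaledGauss T x * scaledGauss T a) ≤ scaledGauss T (x + a) + scaledGauss T (x - a) := by
  have hadd : scaledGauss T (x + a) =
      scaledGauss T x * scaledGauss T a * rexp (-(x * a * T ^ 2)) := by
    simp only [scaledGauss, ← exp_add]; ring_nf
  have hsub : scaledGauss T (x - a) =
      scaledGauss T x * scaledGauss T a * rexp (x * a * T ^ 2) := by
    simp only [scaledGauss, ← exp_add]; ring_nf
  have hcosh := one_le_cosh (x * a * T ^ 2)
  rw [cosh_eq] at hcosh
  rw [hadd, hsub]
  nlinarith [mul_pos (scaledGauss_pos T x) (scaledGauss_pos T a)]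

end

lemma periodicGaussSum_eq_tsum (T x : ℝ) :
    periodicGaussSum T x = ∑' j : ℤ, scaledGauss T (x + 2 * π * j) := rfl

/-- The terms are, up to the factor `scaledGauss T x`, the norms of the terms of the Jacobi theta
series at `z = i x T²`, `τ = 2π i T²`. -/
lemma summable_scaledGauss_add_two_pi_mul_int {T : ℝ} (hT : T ≠ 0) (x : ℝ) :
    Summable fun j : ℤ => scaledGauss T (x + 2 * π * j) := by
  have hτ : 0 < (Complex.I * (2 * π * T ^ 2 : ℝ)).im := by
    simp only [Complex.mul_im, Complex.I_re, Complex.I_im, Complex.ofReal_re, Complex.ofReal_im]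
    have := pi_pos; positivity
  refine (((summable_jacobiTheta₂_term_iff (Complex.I * (x * T ^ 2 : ℝ)) _).2 hτ).norm.mul_left
    (scaledGauss T x)).congr fun j => ?_
  simp only [norm_jacobiTheta₂_term, Complex.mul_im, Complex.I_re, Complex.I_im, Complex.ofReal_re,
    Complex.ofReal_im, scaledGauss, ← exp_add]
  ring_nf

lemma periodicGaussSum_add_two_pi_mul_int (T x : ℝ) (k : ℤ) :
    periodicGaussSum T (x + 2 * π * k) = periodicGaussSum T x := by
  rw [periodicGaussSum_eq_tsum, periodicGaussSum_eq_tsum,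
    ← (Equiv.addRight k).tsum_eq fun j : ℤ => scaledGauss T (x + 2 * π * j)]
  simp only [Equiv.coe_addRight, Int.cast_add]
  ring_nf

lemma periodicGaussSum_neg (T x : ℝ) : periodicGaussSum T (-x) = periodicGaussSum T x := by
  rw [periodicGaussSum_eq_tsum, periodicGaussSum_eq_tsum,
    ← (Equiv.neg ℤ).tsum_eq fun j : ℤ => scaledGauss T (x + 2 * π * j)]
  congr 1 with j
  rw [← scaledGauss_neg]
  simp only [Equiv.neg_apply, Int.cast_neg]
  ring_nf

lemma scaledGauss_mul_periodicGaussSum_zero_le {T : ℝ} (hT : T ≠ 0) (x : ℝ) :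
    scaledGauss T x * periodicGaussSum T 0 ≤ periodicGaussSum T x := by
  have hs := summable_scaledGauss_add_two_pi_mul_int hT
  have hsneg : Summable fun j : ℤ => scaledGauss T (x - 2 * π * j) :=
    ((hs x).comp_injective neg_injective).congr fun j => by simp [sub_eq_add_neg]
  have hreflect : ∑' j : ℤ, scaledGauss T (x - 2 * π * j) = periodicGaussSum T x := by
    rw [periodicGaussSum_eq_tsum,
      ← (Equiv.neg ℤ).tsum_eq fun j : ℤ => scaledGauss T (x + 2 * π * j)]
    simp [sub_eq_add_neg]
  have hpair := ((hs 0).mul_left (2 * scaledGauss T x)).tsum_le_tsum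
    (fun j => by simpa [mul_assoc] using two_mul_scaledGauss_mul_le_add x (2 * π * j))
    ((hs x).add hsneg)
  rw [tsum_mul_left, (hs x).tsum_add hsneg, hreflect, ← periodicGaussSum_eq_tsum,
    ← periodicGaussSum_eq_tsum] at hpair
  linarith

lemma one_le_periodicGaussSum_zero {T : ℝ} (hT : T ≠ 0) : 1 ≤ periodicGaussSum T 0 := by
  simpa [scaledGauss_zero, periodicGaussSum_eq_tsum] using
    (summable_scaledGauss_add_two_pi_mul_int hT 0).le_tsum 0 fun j _ => (scaledGauss_pos T _).le

lemma phip_eq_div (T x : ℝ) : phip T x = periodicGaussSum T x / periodicGaussSum T 0 := by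
  rw [phip, Wconst, div_eq_inv_mul, periodicGaussSum]
  congr 3 with j
  ring_nf

lemma phip_le_periodicGaussSum {T : ℝ} (hT : T ≠ 0) (x : ℝ) :
    phip T x ≤ periodicGaussSum T x := by
  rw [phip_eq_div]
  exact div_le_self (tsum_nonneg fun j => (scaledGauss_pos T _).le)
    (one_le_periodicGaussSum_zero hT)

lemma abs_sub_two_pi_mul_round_le (x : ℝ) (j : ℤ) :
    |x - 2 * π * round (x / (2 * π))| ≤ |x + 2 * π * j| := by
  have hπ : 0 < 2 * π := two_pi_pos
  have h := round_le (x / (2 * π)) (-j)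
  calc |x - 2 * π * round (x / (2 * π))| = 2 * π * |x / (2 * π) - round (x / (2 * π))| := by
        rw [← abs_of_pos hπ, ← abs_mul, abs_of_pos hπ, mul_sub, mul_div_cancel₀ _ hπ.ne']
    _ ≤ 2 * π * |x / (2 * π) - ((-j : ℤ) : ℝ)| := by gcongr
    _ = |x + 2 * π * j| := by
        rw [← abs_of_pos hπ, ← abs_mul, abs_of_pos hπ, mul_sub, mul_div_cancel₀ _ hπ.ne']
        push_cast; ring_nf

lemma dist2pi_eq_abs (u v : ℝ) :
    dist2pi u v = |u - v - 2 * π * round ((u - v) / (2 * π))| := by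
  refine le_antisymm ?_ (le_ciInf (abs_sub_two_pi_mul_round_le (u - v)))
  refine (ciInf_le ⟨0, ?_⟩ (-round ((u - v) / (2 * π)))).trans_eq ?_
  · rintro _ ⟨j, rfl⟩
    exact abs_nonneg _
  · push_cast; ring_nf

lemma dist2pi_nonneg (u v : ℝ) : 0 ≤ dist2pi u v := by
  rw [dist2pi_eq_abs]; exact abs_nonneg _

lemma dist2pi_le_pi (u v : ℝ) : dist2pi u v ≤ π := by
  have h := abs_sub_round ((u - v) / (2 * π))
  have hπ : 0 < 2 * π := two_pi_pos
  rw [dist2pi_eq_abs]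
  calc |u - v - 2 * π * round ((u - v) / (2 * π))|
      = 2 * π * |(u - v) / (2 * π) - round ((u - v) / (2 * π))| := by
        rw [← abs_of_pos hπ, ← abs_mul, abs_of_pos hπ, mul_sub, mul_div_cancel₀ _ hπ.ne']
    _ ≤ 2 * π * (1 / 2) := by gcongr
    _ = π := by ring

lemma periodicGaussSum_sub_eq_dist2pi (T u v : ℝ) :
    periodicGaussSum T (u - v) = periodicGaussSum T (dist2pi u v) := by
  obtain ⟨y, k, hxy, hd⟩ : ∃ (y : ℝ) (k : ℤ), u - v = y + 2 * π * k ∧ dist2pi u v = |y| :=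
    ⟨_, _, by ring, dist2pi_eq_abs u v⟩
  rw [hxy, periodicGaussSum_add_two_pi_mul_int, hd]
  rcases abs_choice y with h | h <;> rw [h]
  rw [periodicGaussSum_neg]

lemma scaledGauss_dist2pi_le_phip {T : ℝ} (hT : T ≠ 0) (u v : ℝ) :
    scaledGauss T (dist2pi u v) ≤ phip T (u - v) := by
  rw [phip_eq_div, periodicGaussSum_sub_eq_dist2pi,
    le_div_iff₀ (one_pos.trans_le (one_le_periodicGaussSum_zero hT))]
  exact scaledGauss_mul_periodicGaussSum_zero_le hT _

lemma phip_pos {T : ℝ} (hT : T ≠ 0) (x : ℝ) : 0 < phip T x := by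
  simpa using (scaledGauss_pos T _).trans_le (scaledGauss_dist2pi_le_phip hT x 0)

lemma tsum_geometric_succ_le_two_mul {ρ : ℝ} (h0 : 0 ≤ ρ) (h : ρ ≤ 1 / 2) :
    ∑' n : ℕ, ρ ^ (n + 1) ≤ 2 * ρ := by
  simp_rw [pow_succ']
  rw [tsum_mul_left, tsum_geometric_of_lt_one h0 (by linarith)]
  have : (1 - ρ)⁻¹ ≤ 2 := by rw [inv_le_comm₀ (by linarith) two_pos]; linarith
  nlinarith

lemma periodicGaussSum_le {T r : ℝ} (hT : 1 ≤ T) (hr0 : 0 ≤ r) (hrπ : r ≤ π) :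
    periodicGaussSum T r ≤
      scaledGauss T r + scaledGauss T (2 * π - r) + 4 * scaledGauss T (2 * π) := by
  set ρ := scaledGauss T (2 * π)
  set f : ℤ → ℝ := fun j => scaledGauss T (r + 2 * π * j)
  have hs : Summable f := summable_scaledGauss_add_two_pi_mul_int (by positivity) r
  have hρ : ρ ≤ 1 / 2 := by
    have := scaledGauss_le_mul_exp_neg hT zero_le_one (c := 0) (y := 2 * π)
      (by nlinarith [pi_gt_three])
    rw [scaledGauss_zero, one_mul] at this
    linarith [exp_neg_one_lt_d9]
  have hgeom : Summable fun n : ℕ => ρ ^ (n + 1) :=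
    (summable_geometric_of_lt_one (scaledGauss_pos T _).le (by linarith)).comp_injective
      (add_left_injective 1)
  have hnat : Summable fun n : ℕ => f n := hs.comp_injective Nat.cast_injective
  have hneg : Summable fun n : ℕ => f (-(n + 1)) :=
    hs.comp_injective fun a b h => by simpa using h
  have hup (n : ℕ) : f (n + 1 : ℕ) ≤ ρ ^ (n + 1) := by
    refine scaledGauss_le_pow ((le_abs_self _).trans' ?_)
    push_cast; linarith
  have hdown (n : ℕ) : f (-((n + 1 : ℕ) + 1)) ≤ ρ ^ (n + 1) := by
    refine scaledGauss_le_pow ((neg_le_abs _).trans' ?_)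
    push_cast; nlinarith [pi_pos]
  have hf0 : f (0 : ℕ) = scaledGauss T r := by simp [f]
  have hf1 : f (-((0 : ℕ) + 1)) = scaledGauss T (2 * π - r) := by
    rw [← scaledGauss_neg]; simp only [f]; push_cast; ring_nf
  rw [periodicGaussSum_eq_tsum, tsum_of_nat_of_neg_add_one hnat hneg, hnat.tsum_eq_zero_add,
    hneg.tsum_eq_zero_add, hf0, hf1]
  have := tsum_geometric_succ_le_two_mul (scaledGauss_pos T (2 * π)).le hρ
  have := (hnat.comp_injective (add_left_injective 1)).tsum_le_tsum hup hgeom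
  have := (hneg.comp_injective (add_left_injective 1)).tsum_le_tsum hdown hgeom
  linarith

lemma exp_neg_nat_le (n : ℕ) : rexp (-n) ≤ 0.3679 ^ n := by
  rw [neg_eq_neg_one_mul, mul_comm, exp_nat_mul]
  exact pow_le_pow_left₀ (exp_pos _).le (exp_neg_one_lt_d9.le.trans (by norm_num)) n

section

variable {T c : ℝ}

lemma scaledGauss_two_pi_le (hT : 1 ≤ T) (hc0 : 0 ≤ c) (hc : c ≤ 2 * π / 3) :
    scaledGauss T (2 * π) ≤ scaledGauss T c * rexp (-8) :=
  scaledGauss_le_mul_exp_neg hT (by norm_num) (by nlinarith [pi_gt_three])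

lemma scaledGauss_two_pi_sub_le (hT : 1 ≤ T) (hc0 : 0 ≤ c) (hc : c ≤ 2 * π / 3) {r : ℝ}
    (hr : r ≤ π) :
    scaledGauss T (2 * π - r) ≤ scaledGauss T c * rexp (-2) :=
  scaledGauss_le_mul_exp_neg hT (by norm_num) (by nlinarith [pi_gt_three])

lemma phip_le_one_add (hT : 1 ≤ T) (hc0 : 0 ≤ c) (hc : c ≤ 2 * π / 3) (u v : ℝ) :
    phip T (u - v) ≤ 1 + scaledGauss T c := by
  have hr := dist2pi_le_pi u v
  have h8 := scaledGauss_two_pi_le hT hc0 hc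
  have h2 := scaledGauss_two_pi_sub_le hT hc0 hc hr
  have he8 : rexp (-8) ≤ 0.3679 ^ 8 := by exact_mod_cast exp_neg_nat_le 8
  have he2 : rexp (-2) ≤ 0.3679 ^ 2 := by exact_mod_cast exp_neg_nat_le 2
  calc phip T (u - v) ≤ periodicGaussSum T (dist2pi u v) := by
        rw [← periodicGaussSum_sub_eq_dist2pi]; exact phip_le_periodicGaussSum (by positivity) _
    _ ≤ 1 + scaledGauss T c * rexp (-2) + 4 * (scaledGauss T c * rexp (-8)) := by
        have := periodicGaussSum_le hT (dist2pi_nonneg u v) hr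
        linarith [scaledGauss_le_one T (dist2pi u v)]
    _ ≤ 1 + scaledGauss T c := by nlinarith [scaledGauss_pos T c]

lemma phip_le_of_le_dist2pi (hT : 1 ≤ T) (hc0 : 0 ≤ c) (hc : c ≤ 2 * π / 3) {u v : ℝ}
    (hd : c ≤ dist2pi u v) : phip T (u - v) ≤ 1.01 * scaledGauss T c := by
  set r := dist2pi u v
  have hr := dist2pi_le_pi u v
  have hsum := periodicGaussSum_le hT (hc0.trans hd) hr
  have h8 := scaledGauss_two_pi_le hT hc0 hc
  have he8 : rexp (-8) ≤ 0.3679 ^ 8 := by exact_mod_cast exp_neg_nat_le 8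
  have hpos := scaledGauss_pos T c
  have hphi : phip T (u - v) ≤ periodicGaussSum T r := by
    rw [← periodicGaussSum_sub_eq_dist2pi]; exact phip_le_periodicGaussSum (by positivity) _
  -- Below `3π/4` the reflected term `j = -1` is negligible; above it the main term `j = 0` has
  -- already lost a factor `exp(-1/2)`.
  rcases le_or_gt r (3 * π / 4) with hr' | hr'
  · have h0 : scaledGauss T r ≤ scaledGauss T c := scaledGauss_le_of_sq_le (by nlinarith)
    have h5 : scaledGauss T (2 * π - r) ≤ scaledGauss T c * rexp (-5) :=
      scaledGauss_le_mul_exp_neg hT (by norm_num) (by nlinarith [pi_gt_three])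
    have he5 : rexp (-5) ≤ 0.3679 ^ 5 := by exact_mod_cast exp_neg_nat_le 5
    nlinarith
  · have hhalf : scaledGauss T r ≤ scaledGauss T c * rexp (-(1 / 2)) :=
      scaledGauss_le_mul_exp_neg hT (by norm_num) (by nlinarith [pi_gt_three])
    have he_half : rexp (-(1 / 2)) ≤ 2 / 3 := by
      rw [exp_neg, inv_le_comm₀ (exp_pos _) (by norm_num)]
      linarith [add_one_le_exp (1 / 2 : ℝ)]
    have h2 := scaledGauss_two_pi_sub_le hT hc0 hc hr
    have he2 : rexp (-2) ≤ 0.3679 ^ 2 := by exact_mod_cast exp_neg_nat_le 2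
    nlinarith

end

lemma sum_mul_le_add_sum_compl {ι : Type*} [Fintype ι] [DecidableEq ι] {p f : ι → ℝ}
    {D : Finset ι} {a : ℝ} (hp : ∀ i, 0 ≤ p i) (hsum : ∑ i, p i = 1)
    (hD : ∀ i ∈ D, f i ≤ a) (hle : ∀ i, f i ≤ 1 + a) :
    ∑ i, p i * f i ≤ a + ∑ i ∈ Dᶜ, p i := by
  have hin : ∑ i ∈ D, p i * f i ≤ (∑ i ∈ D, p i) * a := by
    rw [Finset.sum_mul]
    exact Finset.sum_le_sum fun i hi => mul_le_mul_of_nonneg_left (hD i hi) (hp i)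
  have hout : ∑ i ∈ Dᶜ, p i * f i ≤ (∑ i ∈ Dᶜ, p i) * (1 + a) := by
    rw [Finset.sum_mul]
    exact Finset.sum_le_sum fun i _ => mul_le_mul_of_nonneg_left (hle i) (hp i)
  rw [← Finset.sum_add_sum_compl D] at hsum ⊢
  linear_combination hin + hout + a * hsum

theorem periodic_filter_two_bounds_general
    (M : ℕ) (lam p : Fin M → ℝ) (D : Finset (Fin M)) (hD : D.Nonempty)
    (hp : ∀ m, 0 ≤ p m) (hsum : ∑ m, p m = 1)
    (pmin ptail : ℝ) (hpmin : pmin = D.inf' hD p) (hptail : ptail = ∑ m ∈ Dᶜ, p m)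
    (T : ℝ) (hT : 1 ≤ T) :
    -- (i) lower bound near a dominant eigenvalue
    (∀ q : ℝ, 0 < q → q ≤ 2 * π * T / 3 →
      ptail + (pmin - ptail) / 2 ≤ pmin * Real.exp (-q ^ 2 / 2) →
      ∀ θ : ℝ, ∀ m ∈ D, dist2pi θ (lam m) ≤ q / T →
        ∀ e : ℂ, ‖e‖ ≤ (pmin - ptail) / 8 →
          ptail + 3 * (pmin - ptail) / 8 ≤
            ‖(∑ m' : Fin M, (p m' : ℂ) * (phip T (θ - lam m') : ℝ)) + e‖) ∧
    -- (ii) upper bound far from all dominant eigenvalues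
    (∀ α : ℝ, 0 < α → α ≤ 2 * π * T →
      1.01 * Real.exp (-α ^ 2 / 18) ≤ (pmin - ptail) / 8 →
      ∀ θ : ℝ, (∀ m ∈ D, α / (3 * T) ≤ dist2pi θ (lam m)) →
        ∀ e : ℂ, ‖e‖ ≤ (pmin - ptail) / 8 →
          ‖(∑ m' : Fin M, (p m' : ℂ) * (phip T (θ - lam m') : ℝ)) + e‖ ≤
            ptail + (pmin - ptail) / 4) := by
  have hT0 : T ≠ 0 := by positivity
  have hnorm (θ : ℝ) : ‖∑ m' : Fin M, (p m' : ℂ) * (phip T (θ - lam m') : ℝ)‖ =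
      ∑ m', p m' * phip T (θ - lam m') := by
    rw [← Complex.norm_of_nonneg
      (Finset.sum_nonneg fun i _ => mul_nonneg (hp i) (phip_pos hT0 (θ - lam i)).le)]
    push_cast; rfl
  refine ⟨fun q _ _ hq θ m hm hdq e he => ?_, fun α hα0 hα hαs θ hfar e he => ?_⟩
  · have hφ : rexp (-q ^ 2 / 2) ≤ phip T (θ - lam m) := by
      rw [← scaledGauss_div hT0]
      exact (scaledGauss_le_of_sq_le (pow_le_pow_left₀ (dist2pi_nonneg _ _) hdq 2)).trans
        (scaledGauss_dist2pi_le_phip hT0 _ _)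
    have hS : pmin * rexp (-q ^ 2 / 2) ≤ ∑ m', p m' * phip T (θ - lam m') :=
      (mul_le_mul (hpmin ▸ Finset.inf'_le p hm) hφ (exp_pos _).le (hp m)).trans
        (Finset.single_le_sum (fun i _ => mul_nonneg (hp i) (phip_pos hT0 (θ - lam i)).le)
          (Finset.mem_univ m))
    linarith [norm_sub_le_norm_add (∑ m' : Fin M, (p m' : ℂ) * (phip T (θ - lam m') : ℝ)) e,
      hnorm θ]
  · set c := α / (3 * T) with hc_def
    have hc0 : 0 ≤ c := by positivity
    have hc : c ≤ 2 * π / 3 := by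
      rw [div_le_div_iff₀ (by positivity) three_pos]; nlinarith
    have hgc : scaledGauss T c = rexp (-α ^ 2 / 18) := by
      rw [hc_def, ← div_div, scaledGauss_div hT0]; ring_nf
    have hfar' (m : Fin M) (hm : m ∈ D) : phip T (θ - lam m) ≤ (pmin - ptail) / 8 :=
      (phip_le_of_le_dist2pi hT hc0 hc (hfar m hm)).trans (hgc ▸ hαs)
    have hnear (m : Fin M) : phip T (θ - lam m) ≤ 1 + (pmin - ptail) / 8 :=
      (phip_le_one_add hT hc0 hc _ _).trans (by linarith [scaledGauss_pos T c])
    have hS := sum_mul_le_add_sum_compl hp hsum hfar' hnear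
    linarith [norm_add_le (∑ m' : Fin M, (p m' : ℂ) * (phip T (θ - lam m') : ℝ)) e, hnorm θ]

theorem periodic_filter_two_bounds
    (M : ℕ) (lam p : Fin M → ℝ) (D : Finset (Fin M)) (hD : D.Nonempty)
    (hp : ∀ m, 0 ≤ p m) (hsum : ∑ m, p m = 1)
    (pmin ptail : ℝ) (hpmin : pmin = D.inf' hD p) (hptail : ptail = ∑ m ∈ Dᶜ, p m)
    (hdom : ptail < pmin)
    (T : ℝ) (hT : 1 ≤ T) :
    -- (i) lower bound near a dominant eigenvalue
    (∀ q : ℝ, 0 < q → q ≤ 2 * π * T / 3 →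
      ptail + (pmin - ptail) / 2 ≤ pmin * Real.exp (-q ^ 2 / 2) →
      ∀ θ : ℝ, ∀ m ∈ D, dist2pi θ (lam m) ≤ q / T →
        ∀ e : ℂ, ‖e‖ ≤ (pmin - ptail) / 8 →
          ptail + 3 * (pmin - ptail) / 8 ≤
            ‖(∑ m' : Fin M, (p m' : ℂ) * (phip T (θ - lam m') : ℝ)) + e‖) ∧
    -- (ii) upper bound far from all dominant eigenvalues
    (∀ α : ℝ, 0 < α → α ≤ 2 * π * T →
      1.01 * Real.exp (-α ^ 2 / 18) ≤ (pmin - ptail) / 8 →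
      ∀ θ : ℝ, (∀ m ∈ D, α / (3 * T) ≤ dist2pi θ (lam m)) →
        ∀ e : ℂ, ‖e‖ ≤ (pmin - ptail) / 8 →
          ‖(∑ m' : Fin M, (p m' : ℂ) * (phip T (θ - lam m') : ℝ)) + e‖ ≤
            ptail + (pmin - ptail) / 4) :=
  periodic_filter_two_bounds_general M lam p D hD hp hsum pmin ptail hpmin hptail T hT

end
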